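/- arXiv:1704.04804 — 2 statements merged into one kernel-verified Lean document; each statement's English description precedes it below -/
import Mathlib

section
/- If V is an orthogonal preserving quadratic stochastic operator on the infinite-dimensional simplex, then for any i ≠ j the vectors P_ii = (P_{ii,k})_k and P_jj = (P_{jj,k})_k are orthogonal, i.e., for each k, P_{ii,k} · P_{jj,k} = 0. -/
open Function

def IsSimplexPt (x : ℕ → ℝ) : Prop := (∀ i, 0 ≤ x i) ∧ HasSum x 1

def Orth (x y : ℕ → ℝ) : Prop := Disjoint (support x) (support y)

def QSOCoef (P : ℕ → ℕ → ℕ → ℝ) : Prop :=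
  (∀ i j k, 0 ≤ P i j k) ∧ (∀ i j k, P i j k = P j i k) ∧
  (∀ i j, HasSum (fun k => P i j k) 1)

noncomputable def QSO (P : ℕ → ℕ → ℕ → ℝ) (x : ℕ → ℝ) : ℕ → ℝ :=
  fun k => ∑' i, ∑' j, P i j k * x i * x j

def IsOP (V : (ℕ → ℝ) → (ℕ → ℝ)) : Prop :=
  ∀ x y, IsSimplexPt x → IsSimplexPt y → Orth x y → Orth (V x) (V y)

def stdBasis (k : ℕ) : ℕ → ℝ := fun i => if i = k then 1 else 0


lemma stdBasis_simplex (i : ℕ) : IsSimplexPt (stdBasis i) := by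
  constructor
  · intro j; unfold stdBasis; split <;> norm_num
  · have : stdBasis i = fun j => if j = i then (1:ℝ) else 0 := rfl
    rw [this]
    exact hasSum_ite_eq i 1

lemma stdBasis_orth {i j : ℕ} (h : i ≠ j) : Orth (stdBasis i) (stdBasis j) := by
  rw [Orth, Set.disjoint_left]
  intro a ha hb
  simp only [mem_support, stdBasis] at ha hb
  split_ifs at ha hb with h1 h2
  · exact h (h1 ▸ h2 ▸ rfl)
  all_goals simp_all

lemma qso_stdBasis (Pc : ℕ → ℕ → ℕ → ℝ) (i k : ℕ) :
    QSO Pc (stdBasis i) k = Pc i i k := by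
  unfold QSO stdBasis
  rw [tsum_eq_single i]
  · rw [tsum_eq_single i]
    · simp
    · intro b hb; simp [hb]
  · intro a ha
    have : ∀ b, Pc a b k * (if a = i then (1:ℝ) else 0) * (if b = i then (1:ℝ) else 0) = 0 := by
      intro b; simp [ha]
    simp only [this, tsum_zero]

theorem op_diag_orth (Pc : ℕ → ℕ → ℕ → ℝ) (hP : QSOCoef Pc)
    (hOP : IsOP (QSO Pc)) :
    ∀ i j : ℕ, i ≠ j → ∀ k : ℕ, Pc i i k * Pc j j k = 0 := by
  intro i j hij k
  have h := hOP _ _ (stdBasis_simplex i) (stdBasis_simplex j) (stdBasis_orth hij)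
  rw [Orth, Set.disjoint_left] at h
  by_contra hne
  have h1 : QSO Pc (stdBasis i) k ≠ 0 := by
    rw [qso_stdBasis]; intro h0; apply hne; rw [h0, zero_mul]
  have h2 : QSO Pc (stdBasis j) k ≠ 0 := by
    rw [qso_stdBasis]; intro h0; apply hne; rw [h0, mul_zero]
  exact h h1 h2
end

section
/- If {F_k} is a total pairwise orthogonal family in the infinite-dimensional simplex S, then there is a bijection π : ℕ → ℕ such that F_k = e_{π(k)} for all k, i.e., {F_k} is a permutation of the standard basis. -/
open Function

def IsTotalFam (F : ℕ → ℕ → ℝ) : Prop :=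
  ∀ x : ℕ → ℝ, IsSimplexPt x →
    ∃ l : ℕ → ℝ, (∀ i, 0 ≤ l i) ∧ HasSum l 1 ∧
      ∀ m, HasSum (fun i => l i * F i m) (x m)

/-!
A total family contains every basis vector: writing `e_m = ∑ λ_i F_i` with nonnegative terms,
any `F_i` with `λ_i ≠ 0` vanishes off `m`, hence equals `e_m`. Conversely each `F_k` has some
`m` in its support, and the family member equal to `e_m` shares that point with `F_k`, so by
orthogonality it is `F_k` itself. Thus `k ↦ m` is a bijection.
-/

lemma IsSimplexPt.exists_ne_zero {x : ℕ → ℝ} (hx : IsSimplexPt x) : ∃ m, x m ≠ 0 := by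
  by_contra! h
  have hx0 : x = 0 := funext h
  exact one_ne_zero (hx.2.unique (hx0 ▸ hasSum_zero))

lemma IsSimplexPt.eq_stdBasis_of_eq_zero {x : ℕ → ℝ} (hx : IsSimplexPt x) {m : ℕ}
    (h : ∀ n, n ≠ m → x n = 0) : x = stdBasis m := by
  have hxm : x m = 1 := (hx.2.unique (hasSum_single m h)).symm
  funext n
  by_cases hn : n = m
  · simp [stdBasis, hn, hxm]
  · simp [stdBasis, hn, h n hn]

lemma stdBasis_isSimplexPt (m : ℕ) : IsSimplexPt (stdBasis m) :=
  ⟨fun i => by unfold stdBasis; split <;> norm_num, hasSum_ite_eq m 1⟩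

lemma self_mem_support_stdBasis (m : ℕ) : m ∈ support (stdBasis m) := by simp [stdBasis]

lemma stdBasis_injective : Injective stdBasis := by
  intro a b h
  by_contra hne
  simpa [stdBasis, hne] using congrFun h a

lemma IsTotalFam.exists_eq_stdBasis {F : ℕ → ℕ → ℝ} (hF : ∀ k, IsSimplexPt (F k))
    (htot : IsTotalFam F) (m : ℕ) : ∃ i, F i = stdBasis m := by
  obtain ⟨l, hl0, hl1, hlF⟩ := htot (stdBasis m) (stdBasis_isSimplexPt m)
  obtain ⟨i, hi⟩ := IsSimplexPt.exists_ne_zero ⟨hl0, hl1⟩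
  refine ⟨i, (hF i).eq_stdBasis_of_eq_zero fun n hn => ?_⟩
  have hterms : HasSum (fun j => l j * F j n) 0 := by simpa [stdBasis, hn] using hlF n
  have hterm : l i * F i n = 0 :=
    congrFun ((hasSum_zero_iff_of_nonneg fun j => mul_nonneg (hl0 j) ((hF j).1 n)).mp hterms) i
  exact (mul_eq_zero.mp hterm).resolve_left hi

lemma eq_of_mem_support_of_orth {ι : Type*} {F : ι → ℕ → ℝ}
    (horth : ∀ i j, i ≠ j → Orth (F i) (F j)) {i j : ι} {m : ℕ}
    (hi : m ∈ support (F i)) (hj : m ∈ support (F j)) : i = j := by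
  by_contra hne
  exact Set.disjoint_left.mp (horth i j hne) hi hj

theorem total_is_permuted_basis (F : ℕ → ℕ → ℝ)
    (hF : ∀ k, IsSimplexPt (F k))
    (horth : ∀ i j : ℕ, i ≠ j → Orth (F i) (F j))
    (htot : IsTotalFam F) :
    ∃ π : ℕ ≃ ℕ, ∀ k, F k = stdBasis (π k) := by
  have hbasis : ∀ k, ∃ m, F k = stdBasis m := by
    intro k
    obtain ⟨m, hm⟩ := (hF k).exists_ne_zero
    obtain ⟨i, hi⟩ := htot.exists_eq_stdBasis hF m
    have hmi : m ∈ support (F i) := hi ▸ self_mem_support_stdBasis m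
    exact ⟨m, eq_of_mem_support_of_orth horth hmi hm ▸ hi⟩
  choose π hπ using hbasis
  have hinj : Injective π := fun a b hab =>
    eq_of_mem_support_of_orth horth (hπ a ▸ self_mem_support_stdBasis (π a))
      (hπ b ▸ hab ▸ self_mem_support_stdBasis (π b))
  have hsurj : Surjective π := fun m =>
    (htot.exists_eq_stdBasis hF m).imp fun i hi => stdBasis_injective ((hπ i).symm.trans hi)
  exact ⟨Equiv.ofBijective π ⟨hinj, hsurj⟩, hπ⟩
end
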